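/- For every positive integer m, the greedy algorithm with respect to the Lagonacci sequence terminates: there exist k ≥ 1 and strictly decreasing indices j_1 > j_2 > ... > j_k such that m = Z_{j_1} + ... + Z_{j_k}, where at each step the largest term Z_j ≤ remaining value is chosen. -/

import Mathlib

/-- The Lagonacci sequence: `Z 0 = 1, Z 1 = 2, Z 2 = 3`, `Z (n+3) = Z (n+1) + Z n`. -/
def Z : ℕ → ℕ
  | 0 => 1
  | 1 => 2
  | 2 => 3
  | n + 3 => Z (n + 1) + Z n

theorem Z_pos : ∀ n, 0 < Z n
  | 0 => by simp [Z]
  | 1 => by simp [Z]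
  | 2 => by simp [Z]
  | n + 3 => by
      have := Z_pos n
      simp [Z]; omega

/-- The index of the largest Lagonacci number not exceeding `m`. -/
def greedyIndex (m : ℕ) : ℕ := Nat.findGreatest (fun j => Z j ≤ m) m

theorem greedy_le {m : ℕ} (hm : 1 ≤ m) : Z (greedyIndex m) ≤ m :=
  Nat.findGreatest_spec (P := fun j => Z j ≤ m) (Nat.zero_le m) (by simpa [Z] using hm)

/-- The list of indices produced by the greedy algorithm on `m`. -/
def greedyList : ℕ → List ℕ
  | 0 => []
  | m + 1 => greedyIndex (m + 1) :: greedyList (m + 1 - Z (greedyIndex (m + 1)))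
decreasing_by
  have h1 := Z_pos (greedyIndex (m + 1))
  omega

/-- The number of summands in the greedy Lagonacci decomposition of `m`. -/
def k (m : ℕ) : ℕ := (greedyList m).length

/-!
The sequence `Z` is monotone and grows at most by a factor two per step, `Z (j + 1) ≤ 2 * Z j`.
Hence if `Z j` is the largest term not exceeding `m`, then `m < Z (j + 1) ≤ 2 * Z j`, so the
remainder `m - Z j` is smaller than `Z j` and every later index is strictly smaller than `j`.
-/

theorem Z_le_succ : ∀ n, Z n ≤ Z (n + 1)
  | 0 | 1 | 2 => by simp [Z]
  | n + 3 => by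
      have := Z_le_succ n
      have := Z_le_succ (n + 1)
      simp only [Z]
      omega

theorem Z_monotone : Monotone Z := monotone_nat_of_le_succ Z_le_succ

theorem le_Z : ∀ n, n ≤ Z n
  | 0 | 1 | 2 | 3 => by simp [Z]
  | n + 4 => by
      have := le_Z (n + 2)
      have : Z 1 ≤ Z (n + 1) := Z_monotone (by omega)
      show n + 4 ≤ Z (n + 2) + Z (n + 1)
      simp only [Z] at this
      omega

theorem Z_succ_le_two_mul : ∀ n, Z (n + 1) ≤ 2 * Z n
  | 0 | 1 => by simp [Z]
  | n + 2 => by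
      have : Z n ≤ Z (n + 2) := Z_monotone (by omega)
      have : Z (n + 1) ≤ Z (n + 2) := Z_le_succ (n + 1)
      show Z (n + 1) + Z n ≤ 2 * Z (n + 2)
      omega

theorem greedyIndex_le (m : ℕ) : greedyIndex m ≤ m := Nat.findGreatest_le m

theorem lt_Z_greedyIndex_succ (m : ℕ) : m < Z (greedyIndex m + 1) := by
  rcases (greedyIndex_le m).lt_or_eq with hlt | heq
  · exact not_le.mp (Nat.findGreatest_is_greatest (P := fun j => Z j ≤ m) (Nat.lt_succ_self _) hlt)
  · rw [heq]
    exact (Nat.lt_succ_self m).trans_le (le_Z (m + 1))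

theorem sub_Z_greedyIndex_lt {m : ℕ} (hm : 1 ≤ m) :
    m - Z (greedyIndex m) < Z (greedyIndex m) := by
  have := lt_Z_greedyIndex_succ m
  have := Z_succ_le_two_mul (greedyIndex m)
  have := greedy_le hm
  omega

theorem greedyList_succ (m : ℕ) :
    greedyList (m + 1) = greedyIndex (m + 1) :: greedyList (m + 1 - Z (greedyIndex (m + 1))) := by
  rw [greedyList]

theorem sub_Z_greedyIndex_lt_self (m : ℕ) : m + 1 - Z (greedyIndex (m + 1)) < m + 1 :=
  Nat.sub_lt m.succ_pos (Z_pos _)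

theorem Z_le_of_mem_greedyList {m j : ℕ} (hj : j ∈ greedyList m) : Z j ≤ m := by
  induction m using Nat.strong_induction_on with
  | _ m ih =>
    cases m with
    | zero => simp [greedyList] at hj
    | succ m =>
      rw [greedyList_succ, List.mem_cons] at hj
      rcases hj with rfl | hj
      · exact greedy_le (Nat.le_add_left 1 m)
      · exact (ih _ (sub_Z_greedyIndex_lt_self m) hj).trans (Nat.sub_le _ _)

theorem sum_map_Z_greedyList (m : ℕ) : ((greedyList m).map Z).sum = m := by
  induction m using Nat.strong_induction_on with
  | _ m ih =>
    cases m with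
    | zero => simp [greedyList]
    | succ m =>
      have hle := greedy_le (Nat.le_add_left 1 m)
      rw [greedyList_succ, List.map_cons, List.sum_cons,
        ih _ (sub_Z_greedyIndex_lt_self m)]
      omega

theorem greedyList_pairwise_gt (m : ℕ) : (greedyList m).Pairwise (· > ·) := by
  induction m using Nat.strong_induction_on with
  | _ m ih =>
    cases m with
    | zero => simp [greedyList]
    | succ m =>
      have hrem := sub_Z_greedyIndex_lt (Nat.le_add_left 1 m)
      rw [greedyList_succ, List.pairwise_cons]
      refine ⟨fun i hi => ?_, ih _ (sub_Z_greedyIndex_lt_self m)⟩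
      exact Z_monotone.reflect_lt ((Z_le_of_mem_greedyList hi).trans_lt hrem)

theorem greedyList_ne_nil {m : ℕ} (hm : 1 ≤ m) : greedyList m ≠ [] := by
  obtain ⟨n, rfl⟩ := Nat.exists_eq_add_of_le' hm
  simp [greedyList_succ]

/-- The greedy algorithm terminates on every positive integer, producing
`k ≥ 1` strictly decreasing indices whose Lagonacci values sum to `m`. -/
theorem greedy_terminates (m : ℕ) (hm : 1 ≤ m) :
    greedyList m ≠ [] ∧ List.Chain' (fun a b => b < a) (greedyList m) ∧
      ((greedyList m).map Z).sum = m :=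
  ⟨greedyList_ne_nil hm, (greedyList_pairwise_gt m).isChain, sum_map_Z_greedyList m⟩
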